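/- Let n(t) := (cos t, sin t, 0) and fix κ² > 0. Suppose u : ℝ → ℝ³ is C², 2π-periodic, satisfies (1/2π) ∫_{−π}^{π} |u(t)|² dt = 1, and solves the Euler–Lagrange equation −u''(t) + κ² ( u(t) − (u(t)·n(t)) n(t) ) = λ u(t) for all t, for some λ ∈ ℝ. Then λ = (1/2π) ∫_{−π}^{π} ( |u'(t)|² + κ² |u(t) × n(t)|² ) dt, and if moreover λ < κ², then u(t)·e₃ = 0 for all t, where e₃ = (0,0,1); i.e., u is in-plane. -/

import Mathlib

/-!
Dotting the Euler–Lagrange equation with `u` and integrating over a period, periodicity kills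
the boundary term `u · u'` of the integration by parts, so `∫ u · u'' = -∫ |u'|²`; together with
`|u × n|² = |u|² - (u · n)²` this gives `λ ∫ |u|² = ∫ (|u'|² + κ² |u × n|²)`.
The third component `w = u · e₃` does not see `n` and solves `w'' = (κ² - λ) w`, so the same
integration by parts gives `∫ (w'² + (κ² - λ) w²) = 0`, which forces `w ≡ 0` when `λ < κ²`.
-/

open Real Set MeasureTheory

/-- Squared Euclidean norm of a vector in `ℝ³`. -/
noncomputable def sq3 (v : Fin 3 → ℝ) : ℝ := v 0 ^ 2 + v 1 ^ 2 + v 2 ^ 2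

/-- Euclidean inner product in `ℝ³`. -/
noncomputable def dot3 (v w : Fin 3 → ℝ) : ℝ := v 0 * w 0 + v 1 * w 1 + v 2 * w 2

/-- The outward unit normal `n(t) = (cos t, sin t, 0)` to the unit circle. -/
noncomputable def nvec (t : ℝ) : Fin 3 → ℝ := ![Real.cos t, Real.sin t, 0]

open Function intervalIntegral

theorem sq3_crossProduct (v w : Fin 3 → ℝ) :
    sq3 (crossProduct v w) = sq3 v * sq3 w - dot3 v w ^ 2 := by
  simp only [sq3, dot3, cross_apply, Matrix.cons_val_zero, Matrix.cons_val_one,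
    Matrix.cons_val_two, Matrix.head_cons, Matrix.tail_cons]
  ring

theorem nvec_two (t : ℝ) : nvec t 2 = 0 := rfl

theorem sq3_nvec (t : ℝ) : sq3 (nvec t) = 1 := by
  simp [sq3, nvec, add_comm]

theorem dot3_of_neg_add_smul_eq_smul {v a n : Fin 3 → ℝ} {κ lam : ℝ}
    (h : -a + κ ^ 2 • (v - dot3 v n • n) = lam • v) :
    dot3 v a = κ ^ 2 * (sq3 v - dot3 v n ^ 2) - lam * sq3 v := by
  have hi : ∀ i, -a i + κ ^ 2 * (v i - dot3 v n * n i) = lam * v i := fun i => by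
    simpa using congrFun h i
  simp only [sq3, dot3] at hi ⊢
  linear_combination -(v 0 * hi 0) - v 1 * hi 1 - v 2 * hi 2

theorem Function.Periodic.deriv {𝕜 F : Type*} [NontriviallyNormedField 𝕜] [NormedAddCommGroup F]
    [NormedSpace 𝕜 F] {f : 𝕜 → F} {c : 𝕜} (hf : Periodic f c) : Periodic (deriv f) c :=
  fun x => by rw [← deriv_comp_add_const, hf.funext]

theorem ContDiff.continuous_deriv_deriv {𝕜 F : Type*} [NontriviallyNormedField 𝕜]
    [NormedAddCommGroup F] [NormedSpace 𝕜 F] {f : 𝕜 → F} (hf : ContDiff 𝕜 2 f) :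
    Continuous (deriv (deriv f)) :=
  (hf.deriv' (n := 1)).continuous_deriv le_rfl

theorem DifferentiableAt.hasDerivAt_apply {ι : Type*} [Fintype ι] {f : ℝ → ι → ℝ} {t : ℝ}
    (hf : DifferentiableAt ℝ f t) (i : ι) : HasDerivAt (fun s => f s i) (deriv f t i) t :=
  hasDerivAt_pi.mp hf.hasDerivAt i

theorem integral_deriv_sq_add_mul_eq_zero {w w' w'' : ℝ → ℝ} {a b : ℝ}
    (hw : ∀ t ∈ uIcc a b, HasDerivAt w (w' t) t) (hw' : ∀ t ∈ uIcc a b, HasDerivAt w' (w'' t) t)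
    (hw'' : IntervalIntegrable w'' volume a b) (hwab : w a = w b) (hw'ab : w' a = w' b) :
    ∫ t in a..b, (w' t ^ 2 + w t * w'' t) = 0 := by
  have hcont' : ContinuousOn w' (uIcc a b) := fun t ht => (hw' t ht).continuousAt.continuousWithinAt
  simpa only [sq, hwab, hw'ab, sub_self] using
    integral_deriv_mul_eq_sub hw hw' (hcont'.intervalIntegrable) hw''

theorem Function.Periodic.eq_zero_of_integral_eq_zero {f : ℝ → ℝ} {T : ℝ} (hT : 0 < T)
    (hper : Periodic f T) (hf : Continuous f) (hf0 : 0 ≤ f) (hint : ∫ t in 0..T, f t = 0) :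
    f = 0 := by
  have hae := (integral_eq_zero_iff_of_le_of_nonneg_ae hT.le (.of_forall hf0)
    (hf.intervalIntegrable 0 T)).1 hint
  have hIoc : EqOn f 0 (Ioc 0 T) :=
    Measure.eqOn_Ioc_of_ae_eq volume hae hf.continuousOn continuousOn_const
  funext t
  obtain ⟨y, hy, hty⟩ := hper.exists_mem_Ioc hT t 0
  rw [hty, hIoc (by simpa using hy)]
  rfl

theorem Function.Periodic.eq_zero_of_hasDerivAt_of_hasDerivAt_mul {w w' : ℝ → ℝ} {T μ : ℝ}
    (hT : 0 < T) (hμ : 0 < μ) (hper : Periodic w T) (hw : ∀ t, HasDerivAt w (w' t) t)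
    (hw' : ∀ t, HasDerivAt w' (μ * w t) t) : w = 0 := by
  have hper' : Periodic w' T := by
    rw [show w' = _root_.deriv w from funext fun t => (hw t).deriv.symm]
    exact hper.deriv
  have hcont : Continuous w := continuous_iff_continuousAt.2 fun t => (hw t).continuousAt
  have hcont' : Continuous w' := continuous_iff_continuousAt.2 fun t => (hw' t).continuousAt
  have henergy : (fun t => w' t ^ 2 + w t * (μ * w t)) = 0 := by
    refine Periodic.eq_zero_of_integral_eq_zero hT (fun t => ?_) (by fun_prop)
      (fun t => ?_) ?_
    · simp only [hper t, hper' t]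
    · show 0 ≤ w' t ^ 2 + w t * (μ * w t)
      nlinarith [sq_nonneg (w' t), mul_nonneg hμ.le (mul_self_nonneg (w t))]
    · simpa using integral_deriv_sq_add_mul_eq_zero (fun t _ => hw t) (fun t _ => hw' t)
        ((by fun_prop : Continuous fun t => μ * w t).intervalIntegrable 0 T)
        (by simpa using (hper 0).symm) (by simpa using (hper' 0).symm)
  funext t
  have ht : w' t ^ 2 + w t * (μ * w t) = 0 := congrFun henergy t
  have hwt : μ * w t ^ 2 = 0 := by nlinarith [sq_nonneg (w' t), sq_nonneg (w t)]
  simpa [hμ.ne'] using hwt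

theorem integral_sq3_deriv_add_dot3_deriv_deriv_eq_zero {u : ℝ → Fin 3 → ℝ} {T : ℝ}
    (hu : ContDiff ℝ 2 u) (hper : Periodic u T) (a : ℝ) :
    ∫ t in a..a + T, (sq3 (deriv u t) + dot3 (u t) (deriv (deriv u) t)) = 0 := by
  have hu₀ : Continuous u := hu.continuous
  have hu' : Continuous (deriv u) := hu.continuous_deriv (by norm_num)
  have hu'' : Continuous (deriv (deriv u)) := hu.continuous_deriv_deriv
  have hsum : (fun t => sq3 (deriv u t) + dot3 (u t) (deriv (deriv u) t))
      = fun t => ∑ i, (deriv u t i ^ 2 + u t i * deriv (deriv u) t i) := by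
    funext t
    simp only [sq3, dot3, Fin.sum_univ_three]
    ring
  rw [hsum, integral_finsetSum fun i _ => Continuous.intervalIntegrable (by fun_prop) _ _]
  refine Finset.sum_eq_zero fun i _ => integral_deriv_sq_add_mul_eq_zero
    (fun t _ => (hu.differentiable (by norm_num) t).hasDerivAt_apply i)
    (fun t _ => (hu.differentiable_deriv_two t).hasDerivAt_apply i)
    (Continuous.intervalIntegrable (by fun_prop) _ _) ?_ ?_
  · rw [hper a]
  · rw [hper.deriv a]

theorem integral_energy_eq_mul_integral_sq3 {u : ℝ → Fin 3 → ℝ} {T κ lam : ℝ}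
    (hu : ContDiff ℝ 2 u) (hper : Periodic u T)
    (hEL : ∀ t, -(deriv (deriv u) t) + κ ^ 2 • (u t - dot3 (u t) (nvec t) • nvec t) = lam • u t)
    (a : ℝ) :
    ∫ t in a..a + T, (sq3 (deriv u t) + κ ^ 2 * sq3 (crossProduct (u t) (nvec t)))
      = lam * ∫ t in a..a + T, sq3 (u t) := by
  have hu₀ : Continuous u := hu.continuous
  have hu' : Continuous (deriv u) := hu.continuous_deriv (by norm_num)
  have hu'' : Continuous (deriv (deriv u)) := hu.continuous_deriv_deriv
  have hpoint : (fun t => sq3 (deriv u t) + κ ^ 2 * sq3 (crossProduct (u t) (nvec t)))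
      = fun t => (sq3 (deriv u t) + dot3 (u t) (deriv (deriv u) t)) + lam * sq3 (u t) := by
    funext t
    rw [sq3_crossProduct, sq3_nvec, dot3_of_neg_add_smul_eq_smul (hEL t)]
    ring
  rw [hpoint, intervalIntegral.integral_add,
    integral_sq3_deriv_add_dot3_deriv_deriv_eq_zero hu hper, intervalIntegral.integral_const_mul,
    zero_add]
  all_goals exact Continuous.intervalIntegrable (by simp only [sq3, dot3]; fun_prop) _ _

theorem critical_points_are_inplane
    (κ : ℝ)
    (u : ℝ → Fin 3 → ℝ) (lam : ℝ)
    (hu : ContDiff ℝ 2 u)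
    (hper : ∀ t : ℝ, u (t + 2 * π) = u t)
    (hconstr : (1 / (2 * π)) * ∫ t in (-π)..π, sq3 (u t) = 1)
    (hEL : ∀ t : ℝ,
      -(deriv (deriv u) t) + κ ^ 2 • (u t - dot3 (u t) (nvec t) • nvec t)
        = lam • u t) :
    lam = (1 / (2 * π)) *
        ∫ t in (-π)..π,
          (sq3 (deriv u t) + κ ^ 2 * sq3 (crossProduct (u t) (nvec t))) ∧
    (lam < κ ^ 2 → ∀ t : ℝ, u t 2 = 0) := by
  refine ⟨?_, fun hlt t => ?_⟩
  · have h := integral_energy_eq_mul_integral_sq3 hu hper hEL (-π)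
    rw [show -π + 2 * π = π by ring] at h
    rw [h, mul_left_comm, hconstr, mul_one]
  · have hEL₂ (s : ℝ) : deriv (deriv u) s 2 = (κ ^ 2 - lam) * u s 2 := by
      have h := congrFun (hEL s) 2
      simp only [Pi.add_apply, Pi.neg_apply, Pi.smul_apply, Pi.sub_apply, smul_eq_mul, nvec_two,
        mul_zero, sub_zero] at h
      linarith
    have hw := Periodic.eq_zero_of_hasDerivAt_of_hasDerivAt_mul two_pi_pos (sub_pos.2 hlt)
      (fun s => congrFun (hper s) 2)
      (fun s => (hu.differentiable (by norm_num) s).hasDerivAt_apply 2)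
      (fun s => hEL₂ s ▸ (hu.differentiable_deriv_two s).hasDerivAt_apply 2)
    exact congrFun hw t
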